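/- arXiv:2102.01157 — 6 statements merged into one kernel-verified Lean document; each statement's English description precedes it below -/
import Mathlib

section
/- Let H, K, Q be subgroups of a group G. Then Q·H ∩ Q·K = Q·(H ∩ K) (as subsets of G) if and only if (Q ∩ H)·(Q ∩ K) = Q ∩ (H·K). -/
open Pointwise

theorem stmt_0 {G : Type*} [Group G] (H K Q : Subgroup G) :
    ((Q : Set G) * (H : Set G)) ∩ ((Q : Set G) * (K : Set G)) =
      (Q : Set G) * ((H : Set G) ∩ (K : Set G)) ↔
    ((Q : Set G) ∩ (H : Set G)) * ((Q : Set G) ∩ (K : Set G)) =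
      (Q : Set G) ∩ ((H : Set G) * (K : Set G)) := by
  constructor
  · intro h1
    apply Set.Subset.antisymm
    · rintro x ⟨a, ⟨haQ, haH⟩, b, ⟨hbQ, hbK⟩, rfl⟩
      exact ⟨mul_mem haQ hbQ, a, haH, b, hbK, rfl⟩
    · rintro x ⟨hxQ, h, hH, k, hK, rfl⟩
      dsimp only at *
      have hmem : h ∈ ((Q : Set G) * (H : Set G)) ∩ ((Q : Set G) * (K : Set G)) := by
        refine ⟨⟨1, one_mem Q, h, hH, one_mul h⟩, h * k, hxQ, k⁻¹, inv_mem hK, ?_⟩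
        group
      rw [h1] at hmem
      obtain ⟨q, hqQ, m, ⟨hmH, hmK⟩, hqm⟩ := hmem
      dsimp only at hqm
      refine ⟨q, ⟨hqQ, ?_⟩, m * k, ⟨?_, mul_mem hmK hK⟩, by show q * (m * k) = h * k; rw [← mul_assoc, hqm]⟩
      · have : q = h * m⁻¹ := by rw [← hqm]; group
        rw [this]; exact mul_mem hH (inv_mem hmH)
      · have : m * k = q⁻¹ * (h * k) := by rw [← hqm]; group
        rw [this]; exact mul_mem (inv_mem hqQ) hxQ
  · intro h2
    apply Set.Subset.antisymm
    · rintro x ⟨⟨q1, hq1Q, h, hH, rfl⟩, q2, hq2Q, k, hK, heq⟩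
      dsimp only at *
      have hmem : q1⁻¹ * q2 ∈ ((Q : Set G) ∩ ((H : Set G) * (K : Set G))) := by
        refine ⟨mul_mem (inv_mem hq1Q) hq2Q, h, hH, k⁻¹, inv_mem hK, ?_⟩
        have : q2 = q1 * h * k⁻¹ := by rw [← heq]; group
        rw [this]; group
      rw [← h2] at hmem
      obtain ⟨a, ⟨haQ, haH⟩, b, ⟨hbQ, hbK⟩, hab⟩ := hmem
      dsimp only at hab
      refine ⟨q1 * a, mul_mem hq1Q haQ, a⁻¹ * h, ⟨mul_mem (inv_mem haH) hH, ?_⟩, by group⟩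
      have hkey : a⁻¹ * h = b * k := by
        have h1' : a * b * k = q1⁻¹ * q2 * k := by rw [hab]
        have h2' : q1⁻¹ * q2 * k = q1⁻¹ * (q2 * k) := by group
        have h3' : q2 * k = q1 * h := heq
        have : a * b * k = h := by rw [h1', h2', h3']; group
        calc a⁻¹ * h = a⁻¹ * (a * b * k) := by rw [this]
        _ = b * k := by group
      rw [hkey]; exact mul_mem hbK hK
    · rintro x ⟨q, hqQ, m, ⟨hmH, hmK⟩, rfl⟩
      exact ⟨⟨q, hqQ, m, hmH, rfl⟩, q, hqQ, m, hmK, rfl⟩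
end

section
/- Let H, K, Q be subgroups of a group G. Then Q·H ∩ Q·K = Q·(H ∩ K) holds if and only if for all x, y, z in G, whenever the cosets Qx, Hy, Kz pairwise intersect nontrivially, their triple intersection Qx ∩ Hy ∩ Kz is nonempty. -/
open Pointwise

/-- The right coset `A·x` of a subset `A` of a group. -/
def rightCosetSet {G : Type*} [Group G] (A : Set G) (x : G) : Set G :=
  (fun a => a * x) '' A

/-! Two right cosets `Ax` and `By` meet exactly when `x y⁻¹ ∈ A⁻¹B`. If `Hy` and `Kz` share a point
`c`, then `Hy = Hc` and `Kz = Kc`, so the triple intersection is `Qx ∩ (H ∩ K)c`. The coset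
condition therefore says that `x c⁻¹ ∈ QH ∩ QK` forces `x c⁻¹ ∈ Q(H ∩ K)`, which is the nontrivial
inclusion of `QH ∩ QK = Q(H ∩ K)`. -/

section RightCosetSet

variable {G : Type*} [Group G]

theorem mem_rightCosetSet_iff {A : Set G} {x g : G} : g ∈ rightCosetSet A x ↔ g * x⁻¹ ∈ A :=
  ⟨by rintro ⟨a, ha, rfl⟩; simpa using ha, fun h => ⟨g * x⁻¹, h, inv_mul_cancel_right g x⟩⟩

theorem rightCosetSet_inter (A B : Set G) (x : G) :
    rightCosetSet (A ∩ B) x = rightCosetSet A x ∩ rightCosetSet B x :=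
  Set.image_inter (mul_left_injective x)

theorem rightCosetSet_inter_nonempty_iff (A B : Set G) (x y : G) :
    (rightCosetSet A x ∩ rightCosetSet B y).Nonempty ↔ x * y⁻¹ ∈ A⁻¹ * B := by
  constructor
  · rintro ⟨_, ⟨a, ha, rfl⟩, ⟨b, hb, hab⟩⟩
    refine ⟨a⁻¹, Set.inv_mem_inv.mpr ha, b, hb, ?_⟩
    simp only at hab ⊢
    rw [← mul_inv_eq_iff_eq_mul.mpr hab.symm]
    group
  · rintro ⟨a', ha', b, hb, hab⟩
    refine ⟨b * y, ⟨a'⁻¹, ha', ?_⟩, ⟨b, hb, rfl⟩⟩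
    simp only at hab ⊢
    rw [eq_inv_mul_of_mul_eq hab]
    group

theorem Subgroup.rightCosetSet_eq_of_mem (H : Subgroup G) {y c : G}
    (hc : c ∈ rightCosetSet (H : Set G) y) :
    rightCosetSet (H : Set G) y = rightCosetSet (H : Set G) c := by
  rw [mem_rightCosetSet_iff] at hc
  ext g
  simp only [mem_rightCosetSet_iff, SetLike.mem_coe]
  rw [← H.mul_mem_cancel_right (H.inv_mem hc)]
  simp only [mul_inv_rev, inv_inv, mul_assoc, inv_mul_cancel_left]

theorem Subgroup.rightCosetSet_triple_inter_iff (A : Set G) (H K : Subgroup G) :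
    (∀ x y z : G,
      (rightCosetSet A x ∩ rightCosetSet (H : Set G) y).Nonempty →
      (rightCosetSet A x ∩ rightCosetSet (K : Set G) z).Nonempty →
      (rightCosetSet (H : Set G) y ∩ rightCosetSet (K : Set G) z).Nonempty →
      (rightCosetSet A x ∩ rightCosetSet (H : Set G) y ∩
        rightCosetSet (K : Set G) z).Nonempty) ↔
    A⁻¹ * H ∩ (A⁻¹ * K) ⊆ A⁻¹ * ((H : Set G) ∩ K) := by
  simp only [Set.inter_assoc]
  constructor
  · intro hcoset x ⟨hxH, hxK⟩
    have hHK : (rightCosetSet (H : Set G) 1 ∩ rightCosetSet (K : Set G) 1).Nonempty :=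
      ⟨1, ⟨1, H.one_mem, one_mul 1⟩, ⟨1, K.one_mem, one_mul 1⟩⟩
    have htriple := hcoset x 1 1
      ((rightCosetSet_inter_nonempty_iff _ _ x 1).mpr (by simpa using hxH))
      ((rightCosetSet_inter_nonempty_iff _ _ x 1).mpr (by simpa using hxK)) hHK
    rw [← rightCosetSet_inter, rightCosetSet_inter_nonempty_iff] at htriple
    simpa using htriple
  · rintro hsub x y z hH hK ⟨c, hcH, hcK⟩
    rw [H.rightCosetSet_eq_of_mem hcH, rightCosetSet_inter_nonempty_iff] at hH
    rw [K.rightCosetSet_eq_of_mem hcK, rightCosetSet_inter_nonempty_iff] at hK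
    rw [H.rightCosetSet_eq_of_mem hcH, K.rightCosetSet_eq_of_mem hcK, ← rightCosetSet_inter,
      rightCosetSet_inter_nonempty_iff]
    exact hsub ⟨hH, hK⟩

end RightCosetSet

theorem stmt_1 {G : Type*} [Group G] (H K Q : Subgroup G) :
    ((Q : Set G) * (H : Set G)) ∩ ((Q : Set G) * (K : Set G)) =
      (Q : Set G) * ((H : Set G) ∩ (K : Set G)) ↔
    ∀ x y z : G,
      (rightCosetSet (Q : Set G) x ∩ rightCosetSet (H : Set G) y).Nonempty →
      (rightCosetSet (Q : Set G) x ∩ rightCosetSet (K : Set G) z).Nonempty →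
      (rightCosetSet (H : Set G) y ∩ rightCosetSet (K : Set G) z).Nonempty →
      (rightCosetSet (Q : Set G) x ∩ rightCosetSet (H : Set G) y ∩
        rightCosetSet (K : Set G) z).Nonempty := by
  rw [Subgroup.rightCosetSet_triple_inter_iff, inv_coe_set]
  exact ⟨fun h => h.subset, fun h => h.antisymm Set.mul_inter_subset⟩
end

section
/- Let H, K, Q be subgroups of a group G. Then (Q ∩ H)·(Q ∩ K) = Q ∩ (H·K) holds if and only if for all x, y, z in G, whenever the cosets Qx, Hy, Kz pairwise intersect nontrivially, then Qx ∩ Hy ∩ Kz is nonempty. -/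
open Pointwise

theorem stmt_2 {G : Type*} [Group G] (H K Q : Subgroup G) :
    ((Q : Set G) ∩ (H : Set G)) * ((Q : Set G) ∩ (K : Set G)) =
      (Q : Set G) ∩ ((H : Set G) * (K : Set G)) ↔
    ∀ x y z : G,
      (rightCosetSet (Q : Set G) x ∩ rightCosetSet (H : Set G) y).Nonempty →
      (rightCosetSet (Q : Set G) x ∩ rightCosetSet (K : Set G) z).Nonempty →
      (rightCosetSet (H : Set G) y ∩ rightCosetSet (K : Set G) z).Nonempty →
      (rightCosetSet (Q : Set G) x ∩ rightCosetSet (H : Set G) y ∩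
        rightCosetSet (K : Set G) z).Nonempty := by
  constructor
  · intro hEq x y z hQH hQK hHK
    obtain ⟨a, ⟨q1, hq1, ha1⟩, ⟨h1, hh1, ha2⟩⟩ := hQH
    obtain ⟨b, ⟨q2, hq2, hb1⟩, ⟨k1, hk1, hb2⟩⟩ := hQK
    obtain ⟨c, ⟨h2, hh2, hc1⟩, ⟨k2, hk2, hc2⟩⟩ := hHK
    simp only at ha1 ha2 hb1 hb2 hc1 hc2
    have hQ : a * b⁻¹ ∈ (Q : Set G) := by
      have : a * b⁻¹ = q1 * q2⁻¹ := by rw [← ha1, ← hb1]; group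
      rw [this]; exact mul_mem hq1 (inv_mem hq2)
    have hH : a * c⁻¹ ∈ (H : Set G) := by
      have : a * c⁻¹ = h1 * h2⁻¹ := by rw [← ha2, ← hc1]; group
      rw [this]; exact mul_mem hh1 (inv_mem hh2)
    have hK : c * b⁻¹ ∈ (K : Set G) := by
      have : c * b⁻¹ = k2 * k1⁻¹ := by rw [← hc2, ← hb2]; group
      rw [this]; exact mul_mem hk2 (inv_mem hk1)
    have hmem : a * b⁻¹ ∈ (Q : Set G) ∩ ((H : Set G) * (K : Set G)) := by
      refine ⟨hQ, ?_⟩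
      have : a * b⁻¹ = (a * c⁻¹) * (c * b⁻¹) := by group
      rw [this]; exact Set.mul_mem_mul hH hK
    rw [← hEq] at hmem
    obtain ⟨u, ⟨huQ, huH⟩, v, ⟨hvQ, hvK⟩, huv⟩ := hmem
    simp only at huv
    refine ⟨u⁻¹ * a, ⟨⟨u⁻¹ * q1, mul_mem (inv_mem huQ) hq1, by
        simp only; rw [mul_assoc, ha1]⟩,
      ⟨u⁻¹ * h1, mul_mem (inv_mem huH) hh1, by
        simp only; rw [mul_assoc, ha2]⟩⟩,
      ⟨v * k1, mul_mem hvK hk1, ?_⟩⟩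
    have hv' : v = u⁻¹ * (a * b⁻¹) := by rw [← huv]; group
    simp only
    rw [mul_assoc, hb2, hv']
    group
  · intro hcos
    apply Set.Subset.antisymm
    · rintro g ⟨u, ⟨huQ, huH⟩, v, ⟨hvQ, hvK⟩, rfl⟩
      exact ⟨mul_mem huQ hvQ, Set.mul_mem_mul huH hvK⟩
    · rintro g ⟨hgQ, hg⟩
      obtain ⟨h, hh, k, hk, rfl⟩ := hg
      obtain ⟨w, ⟨⟨q, hq, hw1⟩, ⟨h', hh', hw2⟩⟩, ⟨k', hk', hw3⟩⟩ :=
        hcos 1 (h * k) 1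
          ⟨h * k, ⟨h * k, hgQ, mul_one _⟩, ⟨1, one_mem H, one_mul _⟩⟩
          ⟨1, ⟨1, one_mem Q, mul_one 1⟩, ⟨1, one_mem K, mul_one 1⟩⟩
          ⟨k, ⟨h⁻¹, inv_mem hh, by simp only; group⟩, ⟨k, hk, mul_one k⟩⟩
      simp only at hw1 hw2 hw3
      have hwQ : w ∈ Q := by rw [← hw1]; simpa using hq
      have hwK : w ∈ K := by rw [← hw3]; simpa using hk'
      have hgw : (h * k) * w⁻¹ = h'⁻¹ := by rw [← hw2]; group
      refine ⟨(h * k) * w⁻¹, ⟨mul_mem hgQ (inv_mem hwQ), by rw [hgw]; exact inv_mem hh'⟩,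
        w, ⟨hwQ, hwK⟩, by group⟩
end

section
/- Let G be a group acting on a set X, let H and K be subgroups of G with a common subgroup L ≤ H ∩ K. If there exists x ∈ X with |xH ∩ xK| · |Stab_H(x) ∩ Stab_K(x)| ≤ |L|, then H ∩ K = L. -/
/-- Orbit of `x` under a subset `S` of a group acting on the right via `act`. -/
def rorbit {G X : Type*} (act : X → G → X) (x : X) (S : Set G) : Set X :=
  {y | ∃ s ∈ S, act x s = y}

/-- Elements of `S` fixing `x` under the right action `act`. -/
def rstab {G X : Type*} (act : X → G → X) (x : X) (S : Set G) : Set G :=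
  {s ∈ S | act x s = x}

theorem stmt_4 {G X : Type*} [Group G] [Finite G] [Finite X]
    (act : X → G → X)
    (hone : ∀ x, act x 1 = x)
    (hmul : ∀ (x : X) (g h : G), act x (g * h) = act (act x g) h)
    (H K L : Subgroup G) (hL : L ≤ H ⊓ K)
    (hx : ∃ x : X,
      (rorbit act x (H : Set G) ∩ rorbit act x (K : Set G)).ncard *
        (rstab act x (H : Set G) ∩ rstab act x (K : Set G)).ncard ≤ Nat.card L) :
    H ⊓ K = L := by
  obtain ⟨x, hx⟩ := hx
  letI : SMul G X := ⟨fun g y => act y g⁻¹⟩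
  haveI smul_def : ∀ (g : G) (y : X), g • y = act y g⁻¹ := fun _ _ => rfl
  letI : MulAction G X :=
    { one_smul := fun y => by simp [smul_def, hone]
      mul_smul := fun g h y => by simp [smul_def, mul_inv_rev, hmul] }
  set J := H ⊓ K with hJ
  -- orbit of x under J is contained in the intersection of the rorbits
  have horb : (MulAction.orbit J x : Set X) ⊆
      rorbit act x (H : Set G) ∩ rorbit act x (K : Set G) := by
    rintro y ⟨⟨g, hg⟩, rfl⟩
    exact ⟨⟨g⁻¹, inv_mem hg.1, rfl⟩, ⟨g⁻¹, inv_mem hg.2, rfl⟩⟩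
  have h1 : Nat.card (MulAction.orbit J x) ≤
      (rorbit act x (H : Set G) ∩ rorbit act x (K : Set G)).ncard := by
    rw [Nat.card_coe_set_eq]
    exact Set.ncard_le_ncard horb (Set.toFinite _)
  -- stabilizer of x in J injects into rstab ∩ rstab
  have h2 : Nat.card (MulAction.stabilizer J x) ≤
      (rstab act x (H : Set G) ∩ rstab act x (K : Set G)).ncard := by
    rw [← Nat.card_coe_set_eq]
    have hmem : ∀ g : MulAction.stabilizer J x,
        (((g : J) : G))⁻¹ ∈ rstab act x (H : Set G) ∩ rstab act x (K : Set G) := by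
      intro g
      have hfix : act x (((g : J) : G))⁻¹ = x := g.2
      exact ⟨⟨inv_mem (g : J).2.1, hfix⟩, ⟨inv_mem (g : J).2.2, hfix⟩⟩
    refine Nat.card_le_card_of_injective (fun g => ⟨_, hmem g⟩) ?_
    intro a b hab
    simp only [Subtype.mk.injEq, inv_inj] at hab
    exact Subtype.ext (Subtype.ext hab)
  have horbst : Nat.card (MulAction.orbit J x) * Nat.card (MulAction.stabilizer J x)
      = Nat.card J := by
    letI : Fintype J := Fintype.ofFinite J
    letI : Fintype (MulAction.orbit J x) := Fintype.ofFinite _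
    letI : Fintype (MulAction.stabilizer J x) := Fintype.ofFinite _
    have := MulAction.card_orbit_mul_card_stabilizer_eq_card_group J x
    rw [Nat.card_eq_fintype_card, Nat.card_eq_fintype_card, Nat.card_eq_fintype_card]
    exact this
  have hcard : Nat.card J ≤ Nat.card L := by
    rw [← horbst]
    exact le_trans (Nat.mul_le_mul h1 h2) hx
  exact (Subgroup.eq_of_le_of_card_ge hL hcard).symm
end

section
/- Let G be a group acting on a set X, let H and K be subgroups, and let x ∈ X. Then |H ∩ K| ≤ |xH ∩ xK| · gcd(|Stab_H(x)|, |Stab_K(x)|). -/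
/-- The stabilizer `rstab` of a subgroup is a subgroup. -/
def rstabSubgroup {G X : Type*} [Group G] (act : X → G → X) (x : X)
    (hone : act x 1 = x) (hmul : ∀ (x : X) (g h : G), act x (g * h) = act (act x g) h)
    (J : Subgroup G) : Subgroup G where
  carrier := rstab act x (J : Set G)
  one_mem' := ⟨J.one_mem, hone⟩
  mul_mem' := fun {a b} ha hb => ⟨J.mul_mem ha.1 hb.1, by
    show act x (a * b) = x
    rw [hmul, ha.2, hb.2]⟩
  inv_mem' := fun {a} ha => ⟨J.inv_mem ha.1, by
    show act x a⁻¹ = x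
    have h : act x (a * a⁻¹) = x := by rw [mul_inv_cancel]; exact hone
    rwa [hmul, ha.2] at h⟩

theorem stmt_5 {G X : Type*} [Group G] [Finite G] [Finite X]
    (act : X → G → X)
    (hone : ∀ x, act x 1 = x)
    (hmul : ∀ (x : X) (g h : G), act x (g * h) = act (act x g) h)
    (H K : Subgroup G) (x : X) :
    Set.ncard ((H : Set G) ∩ (K : Set G)) ≤
      (rorbit act x (H : Set G) ∩ rorbit act x (K : Set G)).ncard *
        Nat.gcd (rstab act x (H : Set G)).ncard (rstab act x (K : Set G)).ncard := by
  classical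
  letI := Fintype.ofFinite G
  letI := Fintype.ofFinite X
  have hinv : ∀ g : G, act x g = x → act x g⁻¹ = x := fun g hg => by
    have h : act x (g * g⁻¹) = x := by rw [mul_inv_cancel]; exact hone x
    rwa [hmul, hg] at h
  have hiff : ∀ g : G, act x g⁻¹ = x ↔ act x g = x := fun g =>
    ⟨fun h => by simpa using hinv g⁻¹ h, hinv g⟩
  letI : SMul G X := ⟨fun g y => act y g⁻¹⟩
  letI : MulAction G X :=
    { one_smul := fun y => by show act y 1⁻¹ = y; simpa using hone y
      mul_smul := fun g h y => by
        show act y (g * h)⁻¹ = act (act y h⁻¹) g⁻¹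
        rw [mul_inv_rev, hmul] }
  set L := H ⊓ K with hLdef
  have hcard : Nat.card (MulAction.orbit L x) * Nat.card (MulAction.stabilizer L x)
      = Nat.card L := by
    simpa [Nat.card_eq_fintype_card] using
      MulAction.card_orbit_mul_card_stabilizer_eq_card_group L x
  -- orbit equality
  have horb : MulAction.orbit L x = rorbit act x (L : Set G) := by
    ext y
    constructor
    · rintro ⟨⟨g, hg⟩, rfl⟩
      exact ⟨g⁻¹, L.inv_mem hg, rfl⟩
    · rintro ⟨s, hs, rfl⟩
      exact ⟨⟨s⁻¹, L.inv_mem hs⟩, by show act x s⁻¹⁻¹ = act x s; rw [inv_inv]⟩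
  -- stabilizer equiv
  have estab : MulAction.stabilizer L x ≃ (rstab act x (L : Set G)) :=
    { toFun := fun g => ⟨g.1.1, g.1.2, (hiff g.1.1).mp g.2⟩
      invFun := fun s => ⟨⟨s.1, s.2.1⟩, (hiff s.1).mpr s.2.2⟩
      left_inv := fun g => rfl
      right_inv := fun s => rfl }
  set SH := rstabSubgroup act x (hone x) hmul H with hSHdef
  set SK := rstabSubgroup act x (hone x) hmul K with hSKdef
  have hSH : (SH : Set G) = rstab act x (H : Set G) := rfl
  have hSK : (SK : Set G) = rstab act x (K : Set G) := rfl
  have hSL : ((SH ⊓ SK : Subgroup G) : Set G) = rstab act x (L : Set G) := by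
    rw [Subgroup.coe_inf, hSH, hSK]
    ext s
    simp only [rstab, Set.mem_inter_iff, Set.mem_setOf_eq, hLdef, Subgroup.coe_inf,
      SetLike.mem_coe, Subgroup.mem_inf]
    tauto
  -- LHS
  have hlhs : Set.ncard ((H : Set G) ∩ (K : Set G)) = Nat.card L := by
    rw [← Subgroup.coe_inf, ← Nat.card_coe_set_eq, SetLike.coe_sort_coe]
  rw [hlhs, ← hcard]
  -- orbit bound
  have h1 : Nat.card (MulAction.orbit L x) ≤
      (rorbit act x (H : Set G) ∩ rorbit act x (K : Set G)).ncard := by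
    rw [horb, Nat.card_coe_set_eq]
    apply Set.ncard_le_ncard _ (Set.toFinite _)
    rintro y ⟨s, hs, rfl⟩
    rw [hLdef] at hs
    exact ⟨⟨s, hs.1, rfl⟩, ⟨s, hs.2, rfl⟩⟩
  -- stabilizer bound
  have h2 : Nat.card (MulAction.stabilizer L x) ≤
      Nat.gcd (rstab act x (H : Set G)).ncard (rstab act x (K : Set G)).ncard := by
    have hc : Nat.card (MulAction.stabilizer L x) = Nat.card (SH ⊓ SK : Subgroup G) := by
      rw [Nat.card_congr estab, ← hSL, SetLike.coe_sort_coe]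
    rw [hc, ← hSH, ← hSK]
    simp only [← Nat.card_coe_set_eq, SetLike.coe_sort_coe]
    have hdH : Nat.card (SH ⊓ SK : Subgroup G) ∣ Nat.card SH :=
      Subgroup.card_dvd_of_le inf_le_left
    have hdK : Nat.card (SH ⊓ SK : Subgroup G) ∣ Nat.card SK :=
      Subgroup.card_dvd_of_le inf_le_right
    have hpos : 0 < Nat.card SH := Nat.card_pos
    exact Nat.le_of_dvd (Nat.gcd_pos_of_pos_left _ hpos) (Nat.dvd_gcd hdH hdK)
  exact Nat.mul_le_mul h1 h2
end

section
/- Let G be a group acting on a set X, with subgroups G_i, G_j, G_k. If for some x ∈ X one has |xG_i ∩ x(G_j·G_k)| · |Stab_{G_i}(x)| ≤ |(G_i ∩ G_j)·(G_i ∩ G_k)|, then G_i ∩ G_j·G_k = (G_i ∩ G_j)·(G_i ∩ G_k). -/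
open Pointwise

theorem stmt_7 {G X : Type*} [Group G] [Finite G] [Finite X]
    (act : X → G → X)
    (hone : ∀ x, act x 1 = x)
    (hmul : ∀ (x : X) (g h : G), act x (g * h) = act (act x g) h)
    (Gi Gj Gk : Subgroup G)
    (hx : ∃ x : X,
      (rorbit act x (Gi : Set G) ∩ rorbit act x ((Gj : Set G) * (Gk : Set G))).ncard *
        (rstab act x (Gi : Set G)).ncard ≤
        (((Gi : Set G) ∩ (Gj : Set G)) * ((Gi : Set G) ∩ (Gk : Set G))).ncard) :
    (Gi : Set G) ∩ ((Gj : Set G) * (Gk : Set G)) =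
      ((Gi : Set G) ∩ (Gj : Set G)) * ((Gi : Set G) ∩ (Gk : Set G)) := by
  classical
  obtain ⟨x, hx⟩ := hx
  set S : Set G := (Gi : Set G) ∩ ((Gj : Set G) * (Gk : Set G)) with hS
  set T : Set G := ((Gi : Set G) ∩ (Gj : Set G)) * ((Gi : Set G) ∩ (Gk : Set G)) with hT
  have hinv : ∀ (y : X) (g : G), act (act x g) g⁻¹ = x → act x g = y → act y g⁻¹ = x := by
    intro y g h1 h2; rw [← h2]; exact h1
  have hcanc : ∀ (y : X) (g : G), act (act y g) g⁻¹ = y := by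
    intro y g
    rw [← hmul, mul_inv_cancel, hone]
  -- T ⊆ S
  have hTS : T ⊆ S := by
    rintro t ⟨a, ha, b, hb, rfl⟩
    exact ⟨Gi.mul_mem ha.1 hb.1, a, ha.2, b, hb.2, rfl⟩
  -- representative function
  have repex : ∀ s ∈ S, ∃ r ∈ S, act x r = act x s := fun s hs => ⟨s, hs, rfl⟩
  let rep : X → G := fun y => if h : ∃ r ∈ S, act x r = y then h.choose else 1
  have hrep : ∀ s ∈ S, rep (act x s) ∈ S ∧ act x (rep (act x s)) = act x s := by
    intro s hs
    have h : ∃ r ∈ S, act x r = act x s := ⟨s, hs, rfl⟩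
    simp only [rep, dif_pos h]
    exact ⟨h.choose_spec.1, h.choose_spec.2⟩
  -- the injection
  set O : Set X := rorbit act x (Gi : Set G) ∩ rorbit act x ((Gj : Set G) * (Gk : Set G))
    with hO
  set St : Set G := rstab act x (Gi : Set G) with hSt
  have key : S.ncard ≤ O.ncard * St.ncard := by
    have hprod : (O ×ˢ St).ncard = O.ncard * St.ncard := by
      rw [← Nat.card_coe_set_eq, ← Nat.card_coe_set_eq, ← Nat.card_coe_set_eq,
        ← Nat.card_prod]
      exact Nat.card_congr (Equiv.Set.prod O St)
    rw [← hprod]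
    apply Set.ncard_le_ncard_of_injOn (fun s => (act x s, s * (rep (act x s))⁻¹))
    · intro s hs
      obtain ⟨hsi, hsjk⟩ := hs
      refine ⟨⟨⟨s, hsi, rfl⟩, ⟨s, hsjk, rfl⟩⟩, ?_, ?_⟩
      · exact Gi.mul_mem hsi (Gi.inv_mem (hrep s ⟨hsi, hsjk⟩).1.1)
      · have h2 := (hrep s ⟨hsi, hsjk⟩).2
        rw [hmul]
        calc act (act x s) (rep (act x s))⁻¹
            = act (act x (rep (act x s))) (rep (act x s))⁻¹ := by rw [h2]
          _ = x := hcanc x _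
    · intro s hs s' hs' heq
      have h1 : act x s = act x s' := congrArg Prod.fst heq
      have h2 : s * (rep (act x s))⁻¹ = s' * (rep (act x s'))⁻¹ := congrArg Prod.snd heq
      rw [h1] at h2
      exact mul_right_cancel h2
  have hle : S.ncard ≤ T.ncard := le_trans key hx
  exact (Set.eq_of_subset_of_ncard_le hTS hle (Set.toFinite _)).symm
end
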